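/- arXiv:2011.04487 — 3 statements merged into one kernel-verified Lean document; each statement's English description precedes it below -/
import Mathlib

section
/- For every n₂ ∈ N₂, writing ĥ = ((1, 1), (n₂, 1)) ∈ N̂₂, one has Γ̂ ∩ ĥ H ĥ⁻¹ = ĥ D ĥ⁻¹. In words: the intersection of (N₁ × N₂) ⋊ Q (embedded diagonally) with the conjugate by an element h of N₂ of the subgroup (N₁ ⋊ Q) × Q equals the conjugate by h of (N₁ × 1) ⋊ diag(Q). -/
open SemidirectProduct

/-- For every `n₂ ∈ N₂`, with `ĥ = ((1,1),(n₂,1)) ∈ N̂₂`, one has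
`Γ̂ ∩ ĥ H ĥ⁻¹ = ĥ D ĥ⁻¹`, where inside `G₁ × G₂` (with `Gᵢ = Nᵢ ⋊[ρᵢ] Q`):
`Γ̂ = {((n₁,q),(n₂,q))}` is the diagonal embedding of `(N₁ × N₂) ⋊ Q`,
`H = {((n₁,q),(1,q'))}` is the canonical copy of `G₁ × Q`, and
`D = {((n₁,q),(1,q))}` is the canonical copy of `(N₁ × 1) ⋊ diag(Q)`. -/
theorem gammaHat_inter_conj_H_eq_conj_D {N₁ N₂ Q : Type*} [Group N₁] [Group N₂] [Group Q]
    (ρ₁ : Q →* MulAut N₁) (ρ₂ : Q →* MulAut N₂) :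
    ∀ n₂ : N₂,
      let hHat : (N₁ ⋊[ρ₁] Q) × (N₂ ⋊[ρ₂] Q) := (1, ⟨n₂, 1⟩)
      {x : (N₁ ⋊[ρ₁] Q) × (N₂ ⋊[ρ₂] Q) |
          ∃ (m₁ : N₁) (m₂ : N₂) (q : Q), x = (⟨m₁, q⟩, ⟨m₂, q⟩)} ∩
        ((fun x => hHat * x * hHat⁻¹) ''
          {x : (N₁ ⋊[ρ₁] Q) × (N₂ ⋊[ρ₂] Q) |
            ∃ (m₁ : N₁) (q q' : Q), x = (⟨m₁, q⟩, ⟨1, q'⟩)}) =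
      (fun x => hHat * x * hHat⁻¹) ''
        {x : (N₁ ⋊[ρ₁] Q) × (N₂ ⋊[ρ₂] Q) |
          ∃ (m₁ : N₁) (q : Q), x = (⟨m₁, q⟩, ⟨1, q⟩)} := by
  intro n₂ hHat
  have key : ∀ (a : N₁) (b : Q) (c : N₂) (b' : Q),
      hHat * ((⟨a, b⟩ : N₁ ⋊[ρ₁] Q), (⟨c, b'⟩ : N₂ ⋊[ρ₂] Q)) * hHat⁻¹ =
        ((⟨a, b⟩ : N₁ ⋊[ρ₁] Q), (⟨n₂ * c * ρ₂ b' n₂⁻¹, b'⟩ : N₂ ⋊[ρ₂] Q)) := by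
    intro a b c b'
    simp only [hHat, Prod.mk_mul_mk, Prod.inv_mk, one_mul, mul_one, inv_one]
    rw [Prod.mk.injEq]
    refine ⟨by group, ?_⟩
    ext <;> simp [mul_assoc]
  ext x
  simp only [Set.mem_inter_iff, Set.mem_image, Set.mem_setOf_eq]
  constructor
  · rintro ⟨⟨m₁, m₂, q, rfl⟩, ⟨y, ⟨a, b, b', rfl⟩, heq⟩⟩
    rw [key] at heq
    obtain ⟨h1, h2⟩ := Prod.mk.injEq .. ▸ heq
    rw [SemidirectProduct.ext_iff] at h1 h2
    obtain ⟨ha, hb⟩ := h1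
    obtain ⟨hc, hb'⟩ := h2
    simp only at hc hb'
    subst hb'
    refine ⟨(⟨m₁, b'⟩, ⟨1, b'⟩), ⟨m₁, b', rfl⟩, ?_⟩
    rw [key, hc]
  · rintro ⟨y, ⟨a, b, rfl⟩, rfl⟩
    refine ⟨?_, ⟨(⟨a, b⟩, ⟨1, b⟩), ⟨a, b, b, rfl⟩, rfl⟩⟩
    rw [key]
    exact ⟨a, n₂ * 1 * ρ₂ b n₂⁻¹, b, rfl⟩
end

section
/- For every g ∈ G₁ × G₂ there exists n₂ ∈ N₂ such that, setting ĥ = ((1, 1), (n₂, 1)), one has Γ̂ ∩ g H g⁻¹ = ĥ D ĥ⁻¹. In words: the intersection of the diagonally embedded (N₁ × N₂) ⋊ Q with an arbitrary conjugate of (N₁ ⋊ Q) × Q is a conjugate, by an element of N₂, of (N₁ × 1) ⋊ diag(Q). -/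
open SemidirectProduct

/-- For every `g ∈ G₁ × G₂` there exists `n₂ ∈ N₂` such that, with
`ĥ = ((1,1),(n₂,1))`, one has `Γ̂ ∩ g H g⁻¹ = ĥ D ĥ⁻¹`, where inside `G₁ × G₂`
(with `Gᵢ = Nᵢ ⋊[ρᵢ] Q`): `Γ̂ = {((n₁,q),(n₂,q))}` is the diagonal embedding of
`(N₁ × N₂) ⋊ Q`, `H = {((n₁,q),(1,q'))}` is the canonical copy of `G₁ × Q`, and
`D = {((n₁,q),(1,q))}` is the canonical copy of `(N₁ × 1) ⋊ diag(Q)`. -/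
theorem gammaHat_inter_conj_H_eq_N2_conj_D {N₁ N₂ Q : Type*} [Group N₁] [Group N₂] [Group Q]
    (ρ₁ : Q →* MulAut N₁) (ρ₂ : Q →* MulAut N₂) :
    ∀ g : (N₁ ⋊[ρ₁] Q) × (N₂ ⋊[ρ₂] Q),
      ∃ n₂ : N₂,
        {x : (N₁ ⋊[ρ₁] Q) × (N₂ ⋊[ρ₂] Q) |
            ∃ (m₁ : N₁) (m₂ : N₂) (q : Q), x = (⟨m₁, q⟩, ⟨m₂, q⟩)} ∩
          ((fun x => g * x * g⁻¹) ''
            {x : (N₁ ⋊[ρ₁] Q) × (N₂ ⋊[ρ₂] Q) |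
              ∃ (m₁ : N₁) (q q' : Q), x = (⟨m₁, q⟩, ⟨1, q'⟩)}) =
        (fun x => ((1, ⟨n₂, 1⟩) : (N₁ ⋊[ρ₁] Q) × (N₂ ⋊[ρ₂] Q)) * x *
            ((1, ⟨n₂, 1⟩) : (N₁ ⋊[ρ₁] Q) × (N₂ ⋊[ρ₂] Q))⁻¹) ''
          {x : (N₁ ⋊[ρ₁] Q) × (N₂ ⋊[ρ₂] Q) |
            ∃ (m₁ : N₁) (q : Q), x = (⟨m₁, q⟩, ⟨1, q⟩)} := by
  rintro ⟨⟨a₁, b₁⟩, ⟨a₂, b₂⟩⟩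
  refine ⟨a₂, ?_⟩
  ext x
  simp only [Set.mem_inter_iff, Set.mem_setOf_eq, Set.mem_image]
  constructor
  · rintro ⟨⟨m₁, m₂, q, rfl⟩, ⟨y, ⟨k₁, r, r', rfl⟩, hy⟩⟩
    have h2 := congrArg Prod.snd hy
    rw [SemidirectProduct.ext_iff] at h2
    simp only [Prod.snd_mul, Prod.snd_inv, mul_left, mul_right, inv_left, inv_right,
      one_left, one_right, map_one, map_mul] at h2
    obtain ⟨hm, hq⟩ := h2
    refine ⟨(⟨m₁, q⟩, ⟨1, q⟩), ⟨m₁, q, rfl⟩, ?_⟩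
    refine Prod.ext (by simp) ?_
    rw [SemidirectProduct.ext_iff]
    constructor
    · simp only [Prod.snd_mul, Prod.snd_inv, mul_left, mul_right, inv_left, inv_right,
        one_left, one_right, map_one, map_mul]
      rw [← hm, ← hq]
      simp [mul_assoc]
    · simp
  · rintro ⟨y, ⟨m₁, q, rfl⟩, rfl⟩
    have hx : (((1 : N₁ ⋊[ρ₁] Q), (⟨a₂, 1⟩ : N₂ ⋊[ρ₂] Q)) * (⟨m₁, q⟩, ⟨1, q⟩) *
        ((1 : N₁ ⋊[ρ₁] Q), (⟨a₂, 1⟩ : N₂ ⋊[ρ₂] Q))⁻¹)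
        = ((⟨m₁, q⟩ : N₁ ⋊[ρ₁] Q), (⟨a₂ * ρ₂ q a₂⁻¹, q⟩ : N₂ ⋊[ρ₂] Q)) := by
      refine Prod.ext (by simp) ?_
      rw [SemidirectProduct.ext_iff]
      constructor <;> simp
    rw [hx]
    constructor
    · exact ⟨m₁, a₂ * ρ₂ q a₂⁻¹, q, rfl⟩
    · have hw : ((⟨a₁, b₁⟩, ⟨a₂, b₂⟩) : (N₁ ⋊[ρ₁] Q) × (N₂ ⋊[ρ₂] Q))⁻¹ *
          (⟨m₁, q⟩, ⟨a₂ * ρ₂ q a₂⁻¹, q⟩) * (⟨a₁, b₁⟩, ⟨a₂, b₂⟩)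
          = ((⟨((⟨a₁, b₁⟩ : N₁ ⋊[ρ₁] Q)⁻¹ * ⟨m₁, q⟩ * ⟨a₁, b₁⟩).left,
                ((⟨a₁, b₁⟩ : N₁ ⋊[ρ₁] Q)⁻¹ * ⟨m₁, q⟩ * ⟨a₁, b₁⟩).right⟩ : N₁ ⋊[ρ₁] Q),
              (⟨1, b₂⁻¹ * q * b₂⟩ : N₂ ⋊[ρ₂] Q)) := by
        refine Prod.ext rfl ?_
        rw [SemidirectProduct.ext_iff]
        constructor <;> simp [mul_assoc, map_mul]
      exact ⟨(⟨a₁, b₁⟩, ⟨a₂, b₂⟩)⁻¹ * (⟨m₁, q⟩, ⟨a₂ * ρ₂ q a₂⁻¹, q⟩) *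
          ((⟨a₁, b₁⟩, ⟨a₂, b₂⟩) : (N₁ ⋊[ρ₁] Q) × (N₂ ⋊[ρ₂] Q)),
        ⟨((⟨a₁, b₁⟩ : N₁ ⋊[ρ₁] Q)⁻¹ * ⟨m₁, q⟩ * ⟨a₁, b₁⟩).left,
          ((⟨a₁, b₁⟩ : N₁ ⋊[ρ₁] Q)⁻¹ * ⟨m₁, q⟩ * ⟨a₁, b₁⟩).right, b₂⁻¹ * q * b₂, hw⟩, by group⟩
end

section
/- For every g ∈ G₁ × G₂ × G₃ × G₄, the intersection (Γ̂₁ × Γ̂₂) ∩ g (G₁ × G₂ × G₃ × {1}) g⁻¹ equals Γ̂₁ × M̂₁. In words: the intersection of Γ₁ × Γ₂ with any conjugate of G₁ × G₂ × G₃ equals Γ₁ × (M₁ × 1). -/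
open SemidirectProduct

/-- For every `g ∈ G₁ × G₂ × G₃ × G₄` (where `G₁ = N₁ ⋊ Q`, `G₂ = N₂ ⋊ Q`,
`G₃ = M₁ ⋊ P`, `G₄ = M₂ ⋊ P`), the intersection
`(Γ̂₁ × Γ̂₂) ∩ g (G₁ × G₂ × G₃ × {1}) g⁻¹` equals `Γ̂₁ × M̂₁`, where
`Γ̂₁ = {((n₁,q),(n₂,q))}` and `Γ̂₂ = {((m₁,p),(m₂,p))}` are the diagonal embeddings of
`Γ₁ = (N₁ × N₂) ⋊ Q` and `Γ₂ = (M₁ × M₂) ⋊ P`, `M̂₁ = {((m,1),(1,1)) : m ∈ M₁}` is the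
canonical copy of `M₁ × 1` in `G₃ × G₄`, and `G₁ × G₂ × G₃ × {1}` is the kernel of the
projection onto `G₄`. -/
theorem gamma_prod_inter_conj_eq {N₁ N₂ Q M₁ M₂ P : Type*}
    [Group N₁] [Group N₂] [Group Q] [Group M₁] [Group M₂] [Group P]
    (ρ₁ : Q →* MulAut N₁) (ρ₂ : Q →* MulAut N₂)
    (σ₁ : P →* MulAut M₁) (σ₂ : P →* MulAut M₂) :
    ∀ g : ((N₁ ⋊[ρ₁] Q) × (N₂ ⋊[ρ₂] Q)) × ((M₁ ⋊[σ₁] P) × (M₂ ⋊[σ₂] P)),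
      ({x : (N₁ ⋊[ρ₁] Q) × (N₂ ⋊[ρ₂] Q) |
            ∃ (n₁ : N₁) (n₂ : N₂) (q : Q), x = (⟨n₁, q⟩, ⟨n₂, q⟩)} ×ˢ
          {y : (M₁ ⋊[σ₁] P) × (M₂ ⋊[σ₂] P) |
            ∃ (m₁ : M₁) (m₂ : M₂) (p : P), y = (⟨m₁, p⟩, ⟨m₂, p⟩)}) ∩
        ((fun x => g * x * g⁻¹) ''
          {x : ((N₁ ⋊[ρ₁] Q) × (N₂ ⋊[ρ₂] Q)) × ((M₁ ⋊[σ₁] P) × (M₂ ⋊[σ₂] P)) |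
            x.2.2 = 1}) =
      {x : (N₁ ⋊[ρ₁] Q) × (N₂ ⋊[ρ₂] Q) |
          ∃ (n₁ : N₁) (n₂ : N₂) (q : Q), x = (⟨n₁, q⟩, ⟨n₂, q⟩)} ×ˢ
        {y : (M₁ ⋊[σ₁] P) × (M₂ ⋊[σ₂] P) | ∃ m : M₁, y = (⟨m, 1⟩, 1)} := by
  intro g
  have himg : ((fun x => g * x * g⁻¹) ''
      {x : ((N₁ ⋊[ρ₁] Q) × (N₂ ⋊[ρ₂] Q)) × ((M₁ ⋊[σ₁] P) × (M₂ ⋊[σ₂] P)) |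
        x.2.2 = 1}) = {x | x.2.2 = 1} := by
    ext x
    constructor
    · rintro ⟨y, hy, rfl⟩
      simp only [Set.mem_setOf_eq] at hy ⊢
      simp [Prod.mul_def, hy]
    · intro hx
      simp only [Set.mem_setOf_eq] at hx
      refine ⟨g⁻¹ * x * g, ?_, by group⟩
      simp [Prod.mul_def, hx]
  rw [himg]
  ext ⟨a, b⟩
  simp only [Set.mem_inter_iff, Set.mem_prod, Set.mem_setOf_eq]
  constructor
  · rintro ⟨⟨ha, m₁, m₂, p, rfl⟩, hb⟩
    simp only at hb
    have h1 : m₂ = 1 ∧ p = 1 := by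
      simpa [SemidirectProduct.ext_iff] using hb
    exact ⟨ha, m₁, by simp [h1.1, h1.2, hb]⟩
  · rintro ⟨ha, m, rfl⟩
    exact ⟨⟨ha, m, 1, 1, by simp [SemidirectProduct.ext_iff]⟩, rfl⟩
end
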